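/- If C : ℝ → ℝ is even, continuous and absolutely integrable with ∫_ℝ C(τ) dτ = I, then lim_{T→∞} (1/T) ∫₀ᵀ∫₀ᵀ C(t-s) dt ds = I. -/

import Mathlib

/-!
Substituting `u = t - s` in the inner integral and then `t ↦ T - t` in half of the outer one turns
`∫₀ᵀ∫₀ᵀ C(t - s) ds dt` into `∫₀ᵀ (∫₋ₜᵗ C) dt`. Since `∫₋ₜᵗ C → ∫ C` by integrability, the claim is
the Cesàro principle for integrals: if `f → L` at infinity then `(1/T) ∫₀ᵀ f → L`, because
`∫₀ᵀ (f - L) = o(T)`.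
-/

open MeasureTheory Filter

section

variable {E : Type*} [NormedAddCommGroup E] [NormedSpace ℝ E] {f C : ℝ → E}

lemma isLittleO_intervalIntegral_of_tendsto_zero (hf : ∀ a b, IntervalIntegrable f volume a b)
    (h : Tendsto f atTop (nhds 0)) :
    (fun T : ℝ => ∫ x in (0:ℝ)..T, f x) =o[atTop] id := by
  refine Asymptotics.isLittleO_iff.2 fun c hc => ?_
  have hsmall : ∀ᶠ x in atTop, ‖f x‖ ≤ c / 2 :=
    h.norm.eventually (ge_mem_nhds (by simpa using half_pos hc))
  obtain ⟨M, hM⟩ := eventually_atTop.1 (hsmall.and (eventually_ge_atTop 0))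
  have hM0 : 0 ≤ M := (hM M le_rfl).2
  set K := ‖∫ x in (0:ℝ)..M, f x‖
  filter_upwards [eventually_ge_atTop M, eventually_ge_atTop (2 * K / c)] with T hMT hKT
  have htail : ‖∫ x in M..T, f x‖ ≤ c / 2 * (T - M) := by
    rw [← abs_of_nonneg (sub_nonneg.2 hMT)]
    exact intervalIntegral.norm_integral_le_of_norm_le_const fun x hx =>
      (hM x (by rw [Set.uIoc_of_le hMT] at hx; exact hx.1.le)).1
  have hK : K ≤ c / 2 * T := by
    rw [div_le_iff₀ hc] at hKT
    linarith
  rw [← intervalIntegral.integral_add_adjacent_intervals (hf 0 M) (hf M T), id,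
    Real.norm_of_nonneg (hM0.trans hMT)]
  calc _ ≤ K + ‖∫ x in M..T, f x‖ := norm_add_le _ _
    _ ≤ c / 2 * T + c / 2 * (T - M) := add_le_add hK htail
    _ ≤ c * T := by nlinarith

lemma tendsto_average_intervalIntegral_of_tendsto [CompleteSpace E]
    (hf : ∀ a b, IntervalIntegrable f volume a b)
    {L : E} (h : Tendsto f atTop (nhds L)) :
    Tendsto (fun T : ℝ => (1 / T) • ∫ x in (0:ℝ)..T, f x) atTop (nhds L) := by
  have hdev := (isLittleO_intervalIntegral_of_tendsto_zero (fun a b => (hf a b).sub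
    intervalIntegrable_const) (tendsto_sub_nhds_zero_iff.2 h)).tendsto_inv_smul_nhds_zero
  refine (zero_add L ▸ hdev.add_const L).congr' ?_
  filter_upwards [eventually_ne_atTop 0] with T hT
  rw [intervalIntegral.integral_sub (hf 0 T) intervalIntegrable_const,
    intervalIntegral.integral_const, sub_zero, smul_sub, id, inv_smul_smul₀ hT, one_div,
    sub_add_cancel]

lemma intervalIntegral_intervalIntegral_comp_sub (hC : ∀ a b, IntervalIntegrable C volume a b)
    (T : ℝ) :
    ∫ t in (0:ℝ)..T, ∫ s in (0:ℝ)..T, C (t - s) = ∫ t in (0:ℝ)..T, ∫ u in -t..t, C u := by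
  set P : ℝ → E := fun x => ∫ u in (0:ℝ)..x, C u
  have hP : Continuous P := intervalIntegral.continuous_primitive hC 0
  have hinner (t : ℝ) : ∫ s in (0:ℝ)..T, C (t - s) = P t - P (t - T) := by
    rw [intervalIntegral.integral_comp_sub_left, sub_zero,
      intervalIntegral.integral_interval_sub_left (hC 0 t) (hC 0 (t - T))]
  have hshift : ∫ t in (0:ℝ)..T, P (t - T) = ∫ t in (0:ℝ)..T, P (-t) := by
    rw [intervalIntegral.integral_comp_sub_right, intervalIntegral.integral_comp_neg]
    simp
  have hsymm (t : ℝ) : P t - P (-t) = ∫ u in -t..t, C u :=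
    intervalIntegral.integral_interval_sub_left (hC 0 t) (hC 0 (-t))
  simp_rw [hinner, ← hsymm]
  have hPshift : Continuous fun t => P (t - T) := hP.comp (continuous_sub_right T)
  have hPneg : Continuous fun t => P (-t) := hP.comp continuous_neg
  rw [intervalIntegral.integral_sub (hP.intervalIntegrable _ _) (hPshift.intervalIntegrable _ _),
    hshift, intervalIntegral.integral_sub (hP.intervalIntegrable _ _) (hPneg.intervalIntegrable _ _)]

lemma continuous_intervalIntegral_neg_self (hC : ∀ a b, IntervalIntegrable C volume a b) :
    Continuous fun t => ∫ u in -t..t, C u := by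
  have hP := intervalIntegral.continuous_primitive hC 0
  have hdiff : Continuous fun t => (∫ u in (0:ℝ)..t, C u) - ∫ u in (0:ℝ)..-t, C u :=
    hP.sub (hP.comp continuous_neg)
  simpa only [fun t => intervalIntegral.integral_interval_sub_left (hC 0 t) (hC 0 (-t))]
    using hdiff

end

theorem stmt10_general (C : ℝ → ℝ)
    (hint : Integrable C) (I : ℝ) (hI : (∫ τ : ℝ, C τ) = I) :
    Tendsto (fun T : ℝ => (1 / T) * ∫ t in (0:ℝ)..T, ∫ s in (0:ℝ)..T, C (t - s))
      atTop (nhds I) := by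
  have hloc : ∀ a b, IntervalIntegrable C volume a b := fun _ _ => hint.intervalIntegrable
  have hlim : Tendsto (fun t : ℝ => ∫ u in -t..t, C u) atTop (nhds I) :=
    hI ▸ intervalIntegral_tendsto_integral hint tendsto_neg_atTop_atBot tendsto_id
  simpa only [intervalIntegral_intervalIntegral_comp_sub hloc, smul_eq_mul]
    using tendsto_average_intervalIntegral_of_tendsto
      (fun _ _ => (continuous_intervalIntegral_neg_self hloc).intervalIntegrable _ _) hlim

/-- Short-memory asymptotics: if `C : ℝ → ℝ` is even, continuous and absolutely integrable
with `∫_ℝ C(τ) dτ = I`, then `(1/T) ∫₀ᵀ∫₀ᵀ C(t-s) dt ds → I` as `T → ∞`. -/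
theorem stmt10 (C : ℝ → ℝ) (hC : Continuous C) (heven : ∀ τ : ℝ, C (-τ) = C τ)
    (hint : Integrable C) (I : ℝ) (hI : (∫ τ : ℝ, C τ) = I) :
    Tendsto (fun T : ℝ => (1 / T) * ∫ t in (0:ℝ)..T, ∫ s in (0:ℝ)..T, C (t - s))
      atTop (nhds I) :=
  stmt10_general C hint I hI
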